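/- arXiv:1009.2625 — 14 statements merged into one kernel-verified Lean document; each statement's English description precedes it below -/
import Mathlib

section
/- Let (u₁,u₂,u₃,u₁*,u₂*,u₃*,k₁,k₂,k₁*,k₂*) be a closed dual timelike Frenet frame of period T and let d, d* be the Steiner vectors at t₀. Then the pitch and the real angle of pitch of the closed ruled surface generated by (u₂,u₂*) both vanish: ⟨d, u₂*(t₀)⟩ + ⟨d*, u₂(t₀)⟩ = 0 and ⟨d, u₂(t₀)⟩ = 0. -/
noncomputable section

/-- The Lorentzian inner product on `ℝ³`: `⟨a,b⟩ = -a₁b₁ + a₂b₂ + a₃b₃`. -/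
def lin (a b : Fin 3 → ℝ) : ℝ := -(a 0 * b 0) + a 1 * b 1 + a 2 * b 2

/-- A closed dual timelike Frenet frame of period `T > 0`: differentiable `T`-periodic
frame maps `u₁,u₂,u₃` with dual parts `u₁s,u₂s,u₃s`, continuous `T`-periodic curvature
data `k₁,k₂,k₁s,k₂s`, Lorentzian orthonormality (with `u₁` timelike), the dual unit
conditions `⟨uᵢ,uⱼ*⟩ + ⟨uᵢ*,uⱼ⟩ = 0`, and the (dual) Frenet equations. -/
structure DualFrenetFrame (T : ℝ) where
  u₁ : ℝ → Fin 3 → ℝ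
  u₂ : ℝ → Fin 3 → ℝ
  u₃ : ℝ → Fin 3 → ℝ
  u₁s : ℝ → Fin 3 → ℝ
  u₂s : ℝ → Fin 3 → ℝ
  u₃s : ℝ → Fin 3 → ℝ
  k₁ : ℝ → ℝ
  k₂ : ℝ → ℝ
  k₁s : ℝ → ℝ
  k₂s : ℝ → ℝ
  hT : 0 < T
  diff_u₁ : Differentiable ℝ u₁
  diff_u₂ : Differentiable ℝ u₂
  diff_u₃ : Differentiable ℝ u₃
  diff_u₁s : Differentiable ℝ u₁s
  diff_u₂s : Differentiable ℝ u₂s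
  diff_u₃s : Differentiable ℝ u₃s
  cont_k₁ : Continuous k₁
  cont_k₂ : Continuous k₂
  cont_k₁s : Continuous k₁s
  cont_k₂s : Continuous k₂s
  per_u₁ : Function.Periodic u₁ T
  per_u₂ : Function.Periodic u₂ T
  per_u₃ : Function.Periodic u₃ T
  per_u₁s : Function.Periodic u₁s T
  per_u₂s : Function.Periodic u₂s T
  per_u₃s : Function.Periodic u₃s T
  per_k₁ : Function.Periodic k₁ T
  per_k₂ : Function.Periodic k₂ T
  per_k₁s : Function.Periodic k₁s T
  per_k₂s : Function.Periodic k₂s T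
  h₁₁ : ∀ t, lin (u₁ t) (u₁ t) = -1
  h₂₂ : ∀ t, lin (u₂ t) (u₂ t) = 1
  h₃₃ : ∀ t, lin (u₃ t) (u₃ t) = 1
  h₁₂ : ∀ t, lin (u₁ t) (u₂ t) = 0
  h₁₃ : ∀ t, lin (u₁ t) (u₃ t) = 0
  h₂₃ : ∀ t, lin (u₂ t) (u₃ t) = 0
  hd₁₁ : ∀ t, lin (u₁ t) (u₁s t) + lin (u₁s t) (u₁ t) = 0
  hd₁₂ : ∀ t, lin (u₁ t) (u₂s t) + lin (u₁s t) (u₂ t) = 0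
  hd₁₃ : ∀ t, lin (u₁ t) (u₃s t) + lin (u₁s t) (u₃ t) = 0
  hd₂₁ : ∀ t, lin (u₂ t) (u₁s t) + lin (u₂s t) (u₁ t) = 0
  hd₂₂ : ∀ t, lin (u₂ t) (u₂s t) + lin (u₂s t) (u₂ t) = 0
  hd₂₃ : ∀ t, lin (u₂ t) (u₃s t) + lin (u₂s t) (u₃ t) = 0
  hd₃₁ : ∀ t, lin (u₃ t) (u₁s t) + lin (u₃s t) (u₁ t) = 0
  hd₃₂ : ∀ t, lin (u₃ t) (u₂s t) + lin (u₃s t) (u₂ t) = 0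
  hd₃₃ : ∀ t, lin (u₃ t) (u₃s t) + lin (u₃s t) (u₃ t) = 0
  frenet₁ : ∀ t, deriv u₁ t = k₁ t • u₂ t
  frenet₂ : ∀ t, deriv u₂ t = k₁ t • u₁ t - k₂ t • u₃ t
  frenet₃ : ∀ t, deriv u₃ t = k₂ t • u₂ t
  frenet₁s : ∀ t, deriv u₁s t = k₁s t • u₂ t + k₁ t • u₂s t
  frenet₂s : ∀ t, deriv u₂s t =
    k₁s t • u₁ t - k₂s t • u₃ t + k₁ t • u₁s t - k₂ t • u₃s t
  frenet₃s : ∀ t, deriv u₃s t = k₂s t • u₂ t + k₂ t • u₂s t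

/-- `∮ f = ∫₀ᵀ f(t) dt`. -/
def oint (T : ℝ) (f : ℝ → ℝ) : ℝ := ∫ t in (0:ℝ)..T, f t

/-- The real Steiner vector `d` at `t₀`. -/
def dvec {T : ℝ} (F : DualFrenetFrame T) (t₀ : ℝ) : Fin 3 → ℝ :=
  oint T F.k₂ • F.u₁ t₀ - oint T F.k₁ • F.u₃ t₀

/-- The dual Steiner vector `d*` at `t₀`. -/
def dvecs {T : ℝ} (F : DualFrenetFrame T) (t₀ : ℝ) : Fin 3 → ℝ :=
  oint T F.k₂ • F.u₁s t₀ + oint T F.k₂s • F.u₁ t₀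
    - oint T F.k₁ • F.u₃s t₀ - oint T F.k₁s • F.u₃ t₀

/-- Real part of the parallel frame vector `v₁ = cosh φ · u₁ + sinh φ · u₃`. -/
def pv₁ {T : ℝ} (F : DualFrenetFrame T) (φ : ℝ) : ℝ → Fin 3 → ℝ :=
  fun t => Real.cosh φ • F.u₁ t + Real.sinh φ • F.u₃ t

/-- Real part of the parallel frame vector `v₂ = u₂`. -/
def pv₂ {T : ℝ} (F : DualFrenetFrame T) : ℝ → Fin 3 → ℝ := F.u₂

/-- Real part of the parallel frame vector `v₃ = -sinh φ · u₁ - cosh φ · u₃`. -/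
def pv₃ {T : ℝ} (F : DualFrenetFrame T) (φ : ℝ) : ℝ → Fin 3 → ℝ :=
  fun t => -(Real.sinh φ • F.u₁ t) - Real.cosh φ • F.u₃ t

/-- Dual part `v₁*` of the parallel frame. -/
def pv₁s {T : ℝ} (F : DualFrenetFrame T) (φ φs : ℝ) : ℝ → Fin 3 → ℝ :=
  fun t => Real.cosh φ • F.u₁s t + Real.sinh φ • F.u₃s t
    + φs • (Real.sinh φ • F.u₁ t + Real.cosh φ • F.u₃ t)

/-- Dual part `v₂* = u₂*` of the parallel frame. -/
def pv₂s {T : ℝ} (F : DualFrenetFrame T) : ℝ → Fin 3 → ℝ := F.u₂s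

/-- Dual part `v₃*` of the parallel frame. -/
def pv₃s {T : ℝ} (F : DualFrenetFrame T) (φ φs : ℝ) : ℝ → Fin 3 → ℝ :=
  fun t => -(Real.sinh φ • F.u₁s t) - Real.cosh φ • F.u₃s t
    - φs • (Real.cosh φ • F.u₁ t + Real.sinh φ • F.u₃ t)

/-- Curvature `p = k₁ cosh φ + k₂ sinh φ` of the parallel frame. -/
def pp {T : ℝ} (F : DualFrenetFrame T) (φ : ℝ) : ℝ → ℝ :=
  fun t => F.k₁ t * Real.cosh φ + F.k₂ t * Real.sinh φ

/-- Dual curvature `p*` of the parallel frame. -/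
def pps {T : ℝ} (F : DualFrenetFrame T) (φ φs : ℝ) : ℝ → ℝ :=
  fun t => F.k₁s t * Real.cosh φ + F.k₂s t * Real.sinh φ
    + φs * (F.k₁ t * Real.sinh φ + F.k₂ t * Real.cosh φ)

/-- Torsion `q = -k₁ sinh φ - k₂ cosh φ` of the parallel frame. -/
def pq {T : ℝ} (F : DualFrenetFrame T) (φ : ℝ) : ℝ → ℝ :=
  fun t => -(F.k₁ t * Real.sinh φ) - F.k₂ t * Real.cosh φ

/-- Dual torsion `q*` of the parallel frame. -/
def pqs {T : ℝ} (F : DualFrenetFrame T) (φ φs : ℝ) : ℝ → ℝ :=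
  fun t => -(F.k₁s t * Real.sinh φ) - F.k₂s t * Real.cosh φ
    - φs * (F.k₁ t * Real.cosh φ + F.k₂ t * Real.sinh φ)

/-- The pitch and the real angle of pitch of the closed ruled surface generated by
`(u₂,u₂*)` both vanish. -/
theorem pitch_and_angle_of_pitch_u₂ {T : ℝ} (F : DualFrenetFrame T) (t₀ : ℝ) :
    lin (dvec F t₀) (F.u₂s t₀) + lin (dvecs F t₀) (F.u₂ t₀) = 0 ∧
    lin (dvec F t₀) (F.u₂ t₀) = 0 := by
  have e12 := F.h₁₂ t₀
  have e23 := F.h₂₃ t₀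
  have d12 := F.hd₁₂ t₀
  have d32 := F.hd₃₂ t₀
  simp only [lin, dvec, dvecs, Pi.add_apply, Pi.sub_apply, Pi.smul_apply,
    smul_eq_mul] at *
  refine ⟨?_, ?_⟩
  · linear_combination (oint T F.k₂) * d12 - (oint T F.k₁) * d32
      + (oint T F.k₂s) * e12 - (oint T F.k₁s) * e23
  · linear_combination (oint T F.k₂) * e12 - (oint T F.k₁) * e23
end
end

section
/- Let (u₁,u₂,u₃,u₁*,u₂*,u₃*,k₁,k₂,k₁*,k₂*) be a closed dual timelike Frenet frame of period T. For every t with k₂(t)² ≠ k₁(t)², the drall of the closed ruled surface generated by (u₂,u₂*) satisfies ⟨u₂'(t), u₂*'(t)⟩ / ⟨u₂'(t), u₂'(t)⟩ = (k₂(t)k₂*(t) - k₁(t)k₁*(t)) / (k₂(t)² - k₁(t)²). -/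
noncomputable section

/-- The drall of the closed ruled surface generated by `(u₂,u₂*)` is
`(k₂k₂* - k₁k₁*)/(k₂² - k₁²)`. -/
theorem drall_u₂ {T : ℝ} (F : DualFrenetFrame T) (t : ℝ)
    (h : F.k₂ t ^ 2 ≠ F.k₁ t ^ 2) :
    lin (deriv F.u₂ t) (deriv F.u₂s t) / lin (deriv F.u₂ t) (deriv F.u₂ t)
      = (F.k₂ t * F.k₂s t - F.k₁ t * F.k₁s t) / (F.k₂ t ^ 2 - F.k₁ t ^ 2) := by
  rw [F.frenet₂ t, F.frenet₂s t]
  have h11 := F.h₁₁ t; have h33 := F.h₃₃ t; have h13 := F.h₁₃ t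
  have d11 := F.hd₁₁ t; have d33 := F.hd₃₃ t; have d13 := F.hd₁₃ t
  simp only [lin, Pi.sub_apply, Pi.add_apply, Pi.smul_apply, smul_eq_mul,
    Pi.neg_apply] at h11 h33 h13 d11 d33 d13 ⊢
  have hnum : -((F.k₁ t * F.u₁ t 0 - F.k₂ t * F.u₃ t 0) *
        (F.k₁s t * F.u₁ t 0 - F.k₂s t * F.u₃ t 0 + F.k₁ t * F.u₁s t 0 -
          F.k₂ t * F.u₃s t 0)) +
      (F.k₁ t * F.u₁ t 1 - F.k₂ t * F.u₃ t 1) *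
        (F.k₁s t * F.u₁ t 1 - F.k₂s t * F.u₃ t 1 + F.k₁ t * F.u₁s t 1 -
          F.k₂ t * F.u₃s t 1) +
      (F.k₁ t * F.u₁ t 2 - F.k₂ t * F.u₃ t 2) *
        (F.k₁s t * F.u₁ t 2 - F.k₂s t * F.u₃ t 2 + F.k₁ t * F.u₁s t 2 -
          F.k₂ t * F.u₃s t 2)
      = F.k₂ t * F.k₂s t - F.k₁ t * F.k₁s t := by
    linear_combination F.k₁ t * F.k₁s t * h11 + F.k₂ t * F.k₂s t * h33 -
      (F.k₁ t * F.k₂s t + F.k₂ t * F.k₁s t) * h13 +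
      (F.k₁ t ^ 2 / 2) * d11 + (F.k₂ t ^ 2 / 2) * d33 - F.k₁ t * F.k₂ t * d13
  have hden : -((F.k₁ t * F.u₁ t 0 - F.k₂ t * F.u₃ t 0) *
        (F.k₁ t * F.u₁ t 0 - F.k₂ t * F.u₃ t 0)) +
      (F.k₁ t * F.u₁ t 1 - F.k₂ t * F.u₃ t 1) *
        (F.k₁ t * F.u₁ t 1 - F.k₂ t * F.u₃ t 1) +
      (F.k₁ t * F.u₁ t 2 - F.k₂ t * F.u₃ t 2) *
        (F.k₁ t * F.u₁ t 2 - F.k₂ t * F.u₃ t 2)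
      = F.k₂ t ^ 2 - F.k₁ t ^ 2 := by
    linear_combination F.k₁ t ^ 2 * h11 + F.k₂ t ^ 2 * h33 -
      2 * F.k₁ t * F.k₂ t * h13
  rw [hnum, hden]
end
end

section
/- Let (u₁,u₂,u₃,u₁*,u₂*,u₃*,k₁,k₂,k₁*,k₂*) be a closed dual timelike Frenet frame of period T and let d, d* be the Steiner vectors at t₀. Then the pitch of the closed ruled surface generated by (u₃,u₃*) is L = ⟨d, u₃*(t₀)⟩ + ⟨d*, u₃(t₀)⟩ = -∮k₁*, and its real angle of pitch is λ = -⟨d, u₃(t₀)⟩ = ∮k₁. -/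
noncomputable section

/-- The pitch of the closed ruled surface generated by `(u₃,u₃*)` is `-∮k₁*`, and its
real angle of pitch is `∮k₁`. -/
theorem pitch_and_angle_of_pitch_u₃ {T : ℝ} (F : DualFrenetFrame T) (t₀ : ℝ) :
    lin (dvec F t₀) (F.u₃s t₀) + lin (dvecs F t₀) (F.u₃ t₀) = -oint T F.k₁s ∧
    -lin (dvec F t₀) (F.u₃ t₀) = oint T F.k₁ := by
  have h13 := F.h₁₃ t₀
  have h33 := F.h₃₃ t₀
  have hd13 := F.hd₁₃ t₀
  have hd33 := F.hd₃₃ t₀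
  simp only [lin, dvec, dvecs, Pi.add_apply, Pi.sub_apply, Pi.smul_apply,
    smul_eq_mul] at *
  constructor
  · linear_combination (oint T F.k₂) * hd13 - (oint T F.k₁) * hd33
      + (oint T F.k₂s) * h13 - (oint T F.k₁s) * h33
  · linear_combination -(oint T F.k₂) * h13 + (oint T F.k₁) * h33
end
end

section
/- Let (u₁,u₂,u₃,u₁*,u₂*,u₃*,k₁,k₂,k₁*,k₂*) be a closed dual timelike Frenet frame of period T, let d, d* be the Steiner vectors at t₀, and let ω, ω* : ℝ → ℝ be differentiable. Define c = (sinh ω)u₁ - (cosh ω)u₃ and c* = (sinh ω)u₁* - (cosh ω)u₃* + ω*((cosh ω)u₁ - (sinh ω)u₃) (the spacelike Pfaffian-axis direction). Then the pitch of the closed ruled surface generated by (c,c*) is L_C = ⟨d, c*(t₀)⟩ + ⟨d*, c(t₀)⟩ = sinh ω(t₀)·L_{u₁} - cosh ω(t₀)·L_{u₃} - ω*(t₀)(cosh ω(t₀)·λ_{u₁} - sinh ω(t₀)·λ_{u₃}), and its real angle of pitch is λ_C = -⟨d, c(t₀)⟩ = sinh ω(t₀)·λ_{u₁} - cosh ω(t₀)·λ_{u₃}.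 -/
noncomputable section

lemma lin_comm (a b : Fin 3 → ℝ) : lin a b = lin b a := by simp [lin]; ring

lemma lin_smul_left (r : ℝ) (a b : Fin 3 → ℝ) : lin (r • a) b = r * lin a b := by
  simp [lin]; ring

lemma lin_smul_right (r : ℝ) (a b : Fin 3 → ℝ) : lin a (r • b) = r * lin a b := by
  simp [lin]; ring

lemma lin_add_left (a b c : Fin 3 → ℝ) : lin (a + b) c = lin a c + lin b c := by
  simp [lin]; ring

lemma lin_add_right (a b c : Fin 3 → ℝ) : lin a (b + c) = lin a b + lin a c := by
  simp [lin]; ring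

lemma lin_sub_left (a b c : Fin 3 → ℝ) : lin (a - b) c = lin a c - lin b c := by
  simp [lin]; ring

lemma lin_sub_right (a b c : Fin 3 → ℝ) : lin a (b - c) = lin a b - lin a c := by
  simp [lin]; ring

/-- Pitch and real angle of pitch of the ruled surface generated by the spacelike
Pfaffian-axis direction `C = sinh ω · U₁ - cosh ω · U₃`. -/
theorem pitch_and_angle_of_pitch_spacelike_axis {T : ℝ} (F : DualFrenetFrame T)
    (t₀ : ℝ) (ω ωs : ℝ → ℝ) (hω : Differentiable ℝ ω) (hωs : Differentiable ℝ ωs)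
    (c cs : ℝ → Fin 3 → ℝ)
    (hc : c = fun t => Real.sinh (ω t) • F.u₁ t - Real.cosh (ω t) • F.u₃ t)
    (hcs : cs = fun t => Real.sinh (ω t) • F.u₁s t - Real.cosh (ω t) • F.u₃s t
      + ωs t • (Real.cosh (ω t) • F.u₁ t - Real.sinh (ω t) • F.u₃ t)) :
    lin (dvec F t₀) (cs t₀) + lin (dvecs F t₀) (c t₀)
      = Real.sinh (ω t₀) * (-oint T F.k₂s) - Real.cosh (ω t₀) * (-oint T F.k₁s)
        - ωs t₀ * (Real.cosh (ω t₀) * oint T F.k₂ - Real.sinh (ω t₀) * oint T F.k₁) ∧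
    -lin (dvec F t₀) (c t₀)
      = Real.sinh (ω t₀) * oint T F.k₂ - Real.cosh (ω t₀) * oint T F.k₁ := by
  subst hc hcs
  have e11 : lin (F.u₁ t₀) (F.u₁s t₀) = 0 := by
    have h := F.hd₁₁ t₀
    rw [lin_comm (F.u₁s t₀)] at h
    linarith
  have e33 : lin (F.u₃ t₀) (F.u₃s t₀) = 0 := by
    have h := F.hd₃₃ t₀
    rw [lin_comm (F.u₃s t₀)] at h
    linarith
  have e31 : lin (F.u₃ t₀) (F.u₁s t₀) = -lin (F.u₁ t₀) (F.u₃s t₀) := by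
    have h := F.hd₁₃ t₀
    rw [lin_comm (F.u₁s t₀)] at h
    linarith
  have e1s1 : lin (F.u₁s t₀) (F.u₁ t₀) = 0 := by rw [lin_comm]; exact e11
  have e1s3 : lin (F.u₁s t₀) (F.u₃ t₀) = -lin (F.u₁ t₀) (F.u₃s t₀) := by
    rw [lin_comm]; exact e31
  have e3s1 : lin (F.u₃s t₀) (F.u₁ t₀) = lin (F.u₁ t₀) (F.u₃s t₀) := by
    rw [lin_comm]
  have e3s3 : lin (F.u₃s t₀) (F.u₃ t₀) = 0 := by rw [lin_comm]; exact e33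
  constructor <;>
  · simp only [dvec, dvecs, lin_sub_left, lin_add_left, lin_smul_left,
      lin_sub_right, lin_add_right, lin_smul_right,
      e11, e33, e31, e1s1, e1s3, e3s1, e3s3,
      F.h₁₁ t₀, F.h₃₃ t₀, F.h₁₃ t₀, lin_comm (F.u₃ t₀) (F.u₁ t₀), F.h₁₃ t₀]
    ring
end
end

section
/- Let (u₁,u₂,u₃,u₁*,u₂*,u₃*,k₁,k₂,k₁*,k₂*) be a closed dual timelike Frenet frame of period T and let ω, ω* : ℝ → ℝ be differentiable. Define c = (sinh ω)u₁ - (cosh ω)u₃ and c* = (sinh ω)u₁* - (cosh ω)u₃* + ω*((cosh ω)u₁ - (sinh ω)u₃). Then at every t with (k₁ sinh ω - k₂ cosh ω)² ≠ (ω')², the drall of the closed ruled surface generated by (c,c*) satisfies ⟨c'(t), c*'(t)⟩ / ⟨c'(t), c'(t)⟩ = [ -ω'ω*' + (k₁ sinh ω - k₂ cosh ω)((k₁* - k₂ω*) sinh ω + (k₁ω* - k₂*) cosh ω) ] / [ (k₁ sinh ω - k₂ cosh ω)² - (ω')² ], where all functions are evaluated at t. -/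
noncomputable section

/-- Drall of the ruled surface generated by the spacelike Pfaffian-axis direction
`C = sinh ω · U₁ - cosh ω · U₃`. -/
theorem drall_spacelike_axis {T : ℝ} (F : DualFrenetFrame T)
    (ω ωs : ℝ → ℝ) (hω : Differentiable ℝ ω) (hωs : Differentiable ℝ ωs)
    (c cs : ℝ → Fin 3 → ℝ)
    (hc : c = fun t => Real.sinh (ω t) • F.u₁ t - Real.cosh (ω t) • F.u₃ t)
    (hcs : cs = fun t => Real.sinh (ω t) • F.u₁s t - Real.cosh (ω t) • F.u₃s t
      + ωs t • (Real.cosh (ω t) • F.u₁ t - Real.sinh (ω t) • F.u₃ t))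
    (t : ℝ)
    (h : (F.k₁ t * Real.sinh (ω t) - F.k₂ t * Real.cosh (ω t)) ^ 2 ≠ (deriv ω t) ^ 2) :
    lin (deriv c t) (deriv cs t) / lin (deriv c t) (deriv c t)
      = (-(deriv ω t * deriv ωs t)
          + (F.k₁ t * Real.sinh (ω t) - F.k₂ t * Real.cosh (ω t))
            * ((F.k₁s t - F.k₂ t * ωs t) * Real.sinh (ω t)
              + (F.k₁ t * ωs t - F.k₂s t) * Real.cosh (ω t)))
        / ((F.k₁ t * Real.sinh (ω t) - F.k₂ t * Real.cosh (ω t)) ^ 2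
            - (deriv ω t) ^ 2) := by
  subst hc hcs
  set s := Real.sinh (ω t) with hs
  set ch := Real.cosh (ω t) with hch
  -- derivatives of scalar coefficients
  have hsinh : HasDerivAt (fun t => Real.sinh (ω t)) (ch * deriv ω t) t :=
    (Real.hasDerivAt_sinh (ω t)).comp t (hω t).hasDerivAt
  have hcosh : HasDerivAt (fun t => Real.cosh (ω t)) (s * deriv ω t) t :=
    (Real.hasDerivAt_cosh (ω t)).comp t (hω t).hasDerivAt
  have hwsd : HasDerivAt ωs (deriv ωs t) t := (hωs t).hasDerivAt
  -- derivatives of the frame vectors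
  have hu1 : HasDerivAt F.u₁ (F.k₁ t • F.u₂ t) t := F.frenet₁ t ▸ (F.diff_u₁ t).hasDerivAt
  have hu3 : HasDerivAt F.u₃ (F.k₂ t • F.u₂ t) t := F.frenet₃ t ▸ (F.diff_u₃ t).hasDerivAt
  have hu1s : HasDerivAt F.u₁s (F.k₁s t • F.u₂ t + F.k₁ t • F.u₂s t) t :=
    F.frenet₁s t ▸ (F.diff_u₁s t).hasDerivAt
  have hu3s : HasDerivAt F.u₃s (F.k₂s t • F.u₂ t + F.k₂ t • F.u₂s t) t :=
    F.frenet₃s t ▸ (F.diff_u₃s t).hasDerivAt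
  -- derivative of c
  have hcder : HasDerivAt (fun t => Real.sinh (ω t) • F.u₁ t - Real.cosh (ω t) • F.u₃ t)
      ((s • (F.k₁ t • F.u₂ t) + (ch * deriv ω t) • F.u₁ t)
        - (ch • (F.k₂ t • F.u₂ t) + (s * deriv ω t) • F.u₃ t)) t :=
    (hsinh.smul hu1).sub (hcosh.smul hu3)
  have hg : HasDerivAt (fun t => Real.cosh (ω t) • F.u₁ t - Real.sinh (ω t) • F.u₃ t)
      ((ch • (F.k₁ t • F.u₂ t) + (s * deriv ω t) • F.u₁ t)
        - (s • (F.k₂ t • F.u₂ t) + (ch * deriv ω t) • F.u₃ t)) t :=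
    (hcosh.smul hu1).sub (hsinh.smul hu3)
  have hcsder : HasDerivAt (fun t => Real.sinh (ω t) • F.u₁s t - Real.cosh (ω t) • F.u₃s t
      + ωs t • (Real.cosh (ω t) • F.u₁ t - Real.sinh (ω t) • F.u₃ t))
      (((s • (F.k₁s t • F.u₂ t + F.k₁ t • F.u₂s t) + (ch * deriv ω t) • F.u₁s t)
        - (ch • (F.k₂s t • F.u₂ t + F.k₂ t • F.u₂s t) + (s * deriv ω t) • F.u₃s t))
        + (ωs t • ((ch • (F.k₁ t • F.u₂ t) + (s * deriv ω t) • F.u₁ t)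
            - (s • (F.k₂ t • F.u₂ t) + (ch * deriv ω t) • F.u₃ t))
          + deriv ωs t • (ch • F.u₁ t - s • F.u₃ t))) t :=
    ((hsinh.smul hu1s).sub (hcosh.smul hu3s)).add (hwsd.smul hg)
  rw [hcder.deriv, hcsder.deriv]
  -- unfolded orthonormality hypotheses
  have e11 := F.h₁₁ t; have e22 := F.h₂₂ t; have e33 := F.h₃₃ t
  have e12 := F.h₁₂ t; have e13 := F.h₁₃ t; have e23 := F.h₂₃ t
  have f11 := F.hd₁₁ t; have f12 := F.hd₁₂ t; have f13 := F.hd₁₃ t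
  have f22 := F.hd₂₂ t; have f23 := F.hd₂₃ t; have f33 := F.hd₃₃ t
  simp only [lin] at e11 e22 e33 e12 e13 e23 f11 f12 f13 f22 f23 f33
  have hpy := Real.cosh_sq_sub_sinh_sq (ω t)
  rw [← hch, ← hs] at hpy
  set A := deriv ω t
  set w := ωs t
  set w' := deriv ωs t
  set K1 := F.k₁ t; set K2 := F.k₂ t; set K1s := F.k₁s t; set K2s := F.k₂s t
  have hB : K1 * s - K2 * ch = K1 * s - K2 * ch := rfl
  have hden : lin ((s • (F.k₁ t • F.u₂ t) + (ch * A) • F.u₁ t)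
        - (ch • (F.k₂ t • F.u₂ t) + (s * A) • F.u₃ t))
      ((s • (F.k₁ t • F.u₂ t) + (ch * A) • F.u₁ t)
        - (ch • (F.k₂ t • F.u₂ t) + (s * A) • F.u₃ t))
      = (K1 * s - K2 * ch) ^ 2 - A ^ 2 := by
    simp only [lin, Pi.add_apply, Pi.sub_apply, Pi.smul_apply, smul_eq_mul]
    linear_combination (A^2*ch^2) * e11 + ((K1*s - K2*ch)^2) * e22 + (A^2*s^2) * e33
      + (2*A*ch*(K1*s-K2*ch)) * e12 + (-(2*A^2*s*ch)) * e13
      + (-(2*A*s*(K1*s-K2*ch))) * e23 + (-(A^2)) * hpy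
  have hnum : lin ((s • (F.k₁ t • F.u₂ t) + (ch * A) • F.u₁ t)
        - (ch • (F.k₂ t • F.u₂ t) + (s * A) • F.u₃ t))
      (((s • (F.k₁s t • F.u₂ t + F.k₁ t • F.u₂s t) + (ch * A) • F.u₁s t)
        - (ch • (F.k₂s t • F.u₂ t + F.k₂ t • F.u₂s t) + (s * A) • F.u₃s t))
        + (w • ((ch • (F.k₁ t • F.u₂ t) + (s * A) • F.u₁ t)
            - (s • (F.k₂ t • F.u₂ t) + (ch * A) • F.u₃ t))
          + w' • (ch • F.u₁ t - s • F.u₃ t)))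
      = -(A * w') + (K1 * s - K2 * ch)
          * ((K1s - K2 * w) * s + (K1 * w - K2s) * ch) := by
    simp only [lin, Pi.add_apply, Pi.sub_apply, Pi.smul_apply, smul_eq_mul]
    linear_combination
      ((A*ch)^2/2) * f11 + (-(A^2*s*ch)) * f13 + (A*(K1*s-K2*ch)*ch) * f12
      + (-(A*(K1*s-K2*ch)*s)) * f23 + ((K1*s-K2*ch)^2/2) * f22 + (A^2*s^2/2) * f33
      + (A*ch*(w'*ch + w*A*s)) * e11 + (A*s*(w'*s + w*A*ch)) * e33
      + (-(A*ch*(w'*s + w*A*ch)) - A*s*(w'*ch + w*A*s)) * e13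
      + (A*ch*((K1s - K2*w)*s + (K1*w - K2s)*ch) + (K1*s-K2*ch)*(w'*ch + w*A*s)) * e12
      + (-((K1*s-K2*ch)*(w'*s + w*A*ch)) - A*s*((K1s - K2*w)*s + (K1*w - K2s)*ch)) * e23
      + ((K1*s-K2*ch)*((K1s - K2*w)*s + (K1*w - K2s)*ch)) * e22
      + (-(A*w')) * hpy
  rw [hnum, hden]
end
end

section
/- Let (u₁,u₂,u₃,u₁*,u₂*,u₃*,k₁,k₂,k₁*,k₂*) be a closed dual timelike Frenet frame of period T, let d, d* be the Steiner vectors at t₀, and let ω, ω* : ℝ → ℝ be differentiable. Define c = (cosh ω)u₁ - (sinh ω)u₃ and c* = (cosh ω)u₁* - (sinh ω)u₃* + ω*((sinh ω)u₁ - (cosh ω)u₃) (the timelike Pfaffian-axis direction). Then the pitch of the closed ruled surface generated by (c,c*) is L_C = ⟨d, c*(t₀)⟩ + ⟨d*, c(t₀)⟩ = cosh ω(t₀)·L_{u₁} - sinh ω(t₀)·L_{u₃} - ω*(t₀)(sinh ω(t₀)·λ_{u₁} - cosh ω(t₀)·λ_{u₃}), and its real angle of pitch is λ_C = -⟨d,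 c(t₀)⟩ = cosh ω(t₀)·λ_{u₁} - sinh ω(t₀)·λ_{u₃}. -/
noncomputable section

/-- Pitch and real angle of pitch of the ruled surface generated by the timelike
Pfaffian-axis direction `C = cosh ω · U₁ - sinh ω · U₃`. -/
theorem pitch_and_angle_of_pitch_timelike_axis {T : ℝ} (F : DualFrenetFrame T)
    (t₀ : ℝ) (ω ωs : ℝ → ℝ) (hω : Differentiable ℝ ω) (hωs : Differentiable ℝ ωs)
    (c cs : ℝ → Fin 3 → ℝ)
    (hc : c = fun t => Real.cosh (ω t) • F.u₁ t - Real.sinh (ω t) • F.u₃ t)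
    (hcs : cs = fun t => Real.cosh (ω t) • F.u₁s t - Real.sinh (ω t) • F.u₃s t
      + ωs t • (Real.sinh (ω t) • F.u₁ t - Real.cosh (ω t) • F.u₃ t)) :
    lin (dvec F t₀) (cs t₀) + lin (dvecs F t₀) (c t₀)
      = Real.cosh (ω t₀) * (-oint T F.k₂s) - Real.sinh (ω t₀) * (-oint T F.k₁s)
        - ωs t₀ * (Real.sinh (ω t₀) * oint T F.k₂ - Real.cosh (ω t₀) * oint T F.k₁) ∧
    -lin (dvec F t₀) (c t₀)
      = Real.cosh (ω t₀) * oint T F.k₂ - Real.sinh (ω t₀) * oint T F.k₁ := by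
  subst hc hcs
  have H11 := F.h₁₁ t₀
  have H33 := F.h₃₃ t₀
  have H13 := F.h₁₃ t₀
  have D11 := F.hd₁₁ t₀
  have D13 := F.hd₁₃ t₀
  have D31 := F.hd₃₁ t₀
  have D33 := F.hd₃₃ t₀
  set A := oint T F.k₂ with hA
  set B := oint T F.k₁ with hB
  set As := oint T F.k₂s with hAs
  set Bs := oint T F.k₁s with hBs
  set ch := Real.cosh (ω t₀) with hch
  set sh := Real.sinh (ω t₀) with hsh
  set w := ωs t₀ with hw
  simp only [lin, dvec, dvecs, Pi.add_apply, Pi.sub_apply, Pi.smul_apply,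
    smul_eq_mul, Pi.neg_apply] at *
  constructor
  · linear_combination (A*ch)*D11 + (-(A*sh))*D13 + (-(B*ch))*D31 + (B*sh)*D33
      + (As*ch + A*w*sh)*H11 + (Bs*sh + B*w*ch)*H33
      + (-(As*sh) - A*w*ch - Bs*ch - B*w*sh)*H13
  · linear_combination (-(A*ch))*H11 + (A*sh + B*ch)*H13 + (-(B*sh))*H33
end
end

section
/- Let (u₁,u₂,u₃,u₁*,u₂*,u₃*,k₁,k₂,k₁*,k₂*) be a closed dual timelike Frenet frame of period T and let ω, ω* : ℝ → ℝ be differentiable. Define c = (cosh ω)u₁ - (sinh ω)u₃ and c* = (cosh ω)u₁* - (sinh ω)u₃* + ω*((sinh ω)u₁ - (cosh ω)u₃). Then at every t with (k₁ cosh ω - k₂ sinh ω)² + (ω')² ≠ 0, the drall of the closed ruled surface generated by (c,c*) satisfies ⟨c'(t), c*'(t)⟩ / ⟨c'(t), c'(t)⟩ = [ ω'ω*' + (k₁ cosh ω - k₂ sinh ω)((k₁* - k₂ω*) cosh ω + (k₁ω* - k₂*) sinh ω) ] / [ (k₁ cosh ω - k₂ sinh ω)² + (ω')² ], where all functions are evaluated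 at t. -/
noncomputable section

/-- Drall of the ruled surface generated by the timelike Pfaffian-axis direction
`C = cosh ω · U₁ - sinh ω · U₃`. -/
theorem drall_timelike_axis {T : ℝ} (F : DualFrenetFrame T)
    (ω ωs : ℝ → ℝ) (hω : Differentiable ℝ ω) (hωs : Differentiable ℝ ωs)
    (c cs : ℝ → Fin 3 → ℝ)
    (hc : c = fun t => Real.cosh (ω t) • F.u₁ t - Real.sinh (ω t) • F.u₃ t)
    (hcs : cs = fun t => Real.cosh (ω t) • F.u₁s t - Real.sinh (ω t) • F.u₃s t
      + ωs t • (Real.sinh (ω t) • F.u₁ t - Real.cosh (ω t) • F.u₃ t))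
    (t : ℝ)
    (h : (F.k₁ t * Real.cosh (ω t) - F.k₂ t * Real.sinh (ω t)) ^ 2 + (deriv ω t) ^ 2 ≠ 0) :
    lin (deriv c t) (deriv cs t) / lin (deriv c t) (deriv c t)
      = (deriv ω t * deriv ωs t
          + (F.k₁ t * Real.cosh (ω t) - F.k₂ t * Real.sinh (ω t))
            * ((F.k₁s t - F.k₂ t * ωs t) * Real.cosh (ω t)
              + (F.k₁ t * ωs t - F.k₂s t) * Real.sinh (ω t)))
        / ((F.k₁ t * Real.cosh (ω t) - F.k₂ t * Real.sinh (ω t)) ^ 2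
            + (deriv ω t) ^ 2) := by
  have hu₁ : HasDerivAt F.u₁ (F.k₁ t • F.u₂ t) t := by
    have h := (F.diff_u₁ t).hasDerivAt; rwa [F.frenet₁ t] at h
  have hu₃ : HasDerivAt F.u₃ (F.k₂ t • F.u₂ t) t := by
    have h := (F.diff_u₃ t).hasDerivAt; rwa [F.frenet₃ t] at h
  have hu₁s : HasDerivAt F.u₁s (F.k₁s t • F.u₂ t + F.k₁ t • F.u₂s t) t := by
    have h := (F.diff_u₁s t).hasDerivAt; rwa [F.frenet₁s t] at h
  have hu₃s : HasDerivAt F.u₃s (F.k₂s t • F.u₂ t + F.k₂ t • F.u₂s t) t := by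
    have h := (F.diff_u₃s t).hasDerivAt; rwa [F.frenet₃s t] at h
  have hωt : HasDerivAt ω (deriv ω t) t := (hω t).hasDerivAt
  have hωst : HasDerivAt ωs (deriv ωs t) t := (hωs t).hasDerivAt
  have hch : HasDerivAt (fun s => Real.cosh (ω s)) (Real.sinh (ω t) * deriv ω t) t :=
    (Real.hasDerivAt_cosh (ω t)).comp t hωt
  have hsh : HasDerivAt (fun s => Real.sinh (ω s)) (Real.cosh (ω t) * deriv ω t) t :=
    (Real.hasDerivAt_sinh (ω t)).comp t hωt
  have hc' : HasDerivAt c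
      (Real.cosh (ω t) • (F.k₁ t • F.u₂ t) + (Real.sinh (ω t) * deriv ω t) • F.u₁ t
        - (Real.sinh (ω t) • (F.k₂ t • F.u₂ t)
            + (Real.cosh (ω t) * deriv ω t) • F.u₃ t)) t := by
    rw [hc]; exact (hch.smul hu₁).sub (hsh.smul hu₃)
  have hg : HasDerivAt (fun s => Real.sinh (ω s) • F.u₁ s - Real.cosh (ω s) • F.u₃ s)
      (Real.sinh (ω t) • (F.k₁ t • F.u₂ t) + (Real.cosh (ω t) * deriv ω t) • F.u₁ t
        - (Real.cosh (ω t) • (F.k₂ t • F.u₂ t)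
            + (Real.sinh (ω t) * deriv ω t) • F.u₃ t)) t :=
    (hsh.smul hu₁).sub (hch.smul hu₃)
  have hcs' : HasDerivAt cs
      (Real.cosh (ω t) • (F.k₁s t • F.u₂ t + F.k₁ t • F.u₂s t)
          + (Real.sinh (ω t) * deriv ω t) • F.u₁s t
        - (Real.sinh (ω t) • (F.k₂s t • F.u₂ t + F.k₂ t • F.u₂s t)
            + (Real.cosh (ω t) * deriv ω t) • F.u₃s t)
        + (ωs t • (Real.sinh (ω t) • (F.k₁ t • F.u₂ t)
                + (Real.cosh (ω t) * deriv ω t) • F.u₁ t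
              - (Real.cosh (ω t) • (F.k₂ t • F.u₂ t)
                  + (Real.sinh (ω t) * deriv ω t) • F.u₃ t))
            + deriv ωs t • (Real.sinh (ω t) • F.u₁ t - Real.cosh (ω t) • F.u₃ t))) t := by
    rw [hcs]; exact ((hch.smul hu₁s).sub (hsh.smul hu₃s)).add (hωst.smul hg)
  have e11 := F.h₁₁ t; have e22 := F.h₂₂ t; have e33 := F.h₃₃ t
  have e12 := F.h₁₂ t; have e13 := F.h₁₃ t; have e23 := F.h₂₃ t
  have d11 := F.hd₁₁ t; have d22 := F.hd₂₂ t; have d33 := F.hd₃₃ t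
  have d12 := F.hd₁₂ t; have d13 := F.hd₁₃ t; have d23 := F.hd₂₃ t
  have hpy := Real.cosh_sq_sub_sinh_sq (ω t)
  simp only [lin] at e11 e22 e33 e12 e13 e23 d11 d22 d33 d12 d13 d23
  set ch := Real.cosh (ω t)
  set sh := Real.sinh (ω t)
  set a := deriv ω t
  set b := deriv ωs t
  have hden : lin (deriv c t) (deriv c t)
      = (F.k₁ t * ch - F.k₂ t * sh) ^ 2 + a ^ 2 := by
    rw [hc'.deriv]
    simp only [lin, Pi.add_apply, Pi.sub_apply, Pi.smul_apply, smul_eq_mul]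
    linear_combination (sh * a) ^ 2 * e11 + (F.k₁ t * ch - F.k₂ t * sh) ^ 2 * e22
      + (ch * a) ^ 2 * e33
      + (2 * sh * a * (F.k₁ t * ch - F.k₂ t * sh)) * e12
      + (-2 * sh * a * ch * a) * e13
      + (-2 * (F.k₁ t * ch - F.k₂ t * sh) * ch * a) * e23
      + a ^ 2 * hpy
  have hnum : lin (deriv c t) (deriv cs t)
      = a * b + (F.k₁ t * ch - F.k₂ t * sh)
          * ((F.k₁s t - F.k₂ t * ωs t) * ch + (F.k₁ t * ωs t - F.k₂s t) * sh) := by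
    rw [hc'.deriv, hcs'.deriv]
    simp only [lin, Pi.add_apply, Pi.sub_apply, Pi.smul_apply, smul_eq_mul]
    linear_combination
      (sh * a) * (b * sh + ωs t * a * ch) * e11
      + (F.k₁ t * ch - F.k₂ t * sh)
          * ((F.k₁s t - F.k₂ t * ωs t) * ch + (F.k₁ t * ωs t - F.k₂s t) * sh) * e22
      + (ch * a) * (b * ch + ωs t * a * sh) * e33
      + ((sh * a) * ((F.k₁s t - F.k₂ t * ωs t) * ch + (F.k₁ t * ωs t - F.k₂s t) * sh)
          + (F.k₁ t * ch - F.k₂ t * sh) * (b * sh + ωs t * a * ch)) * e12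
      + ((sh * a) * (-(b * ch + ωs t * a * sh)) + (-(ch * a)) * (b * sh + ωs t * a * ch)) * e13
      + ((F.k₁ t * ch - F.k₂ t * sh) * (-(b * ch + ωs t * a * sh))
          + (-(ch * a)) * ((F.k₁s t - F.k₂ t * ωs t) * ch + (F.k₁ t * ωs t - F.k₂s t) * sh)) * e23
      + (a ^ 2 * sh ^ 2 / 2) * d11
      + ((F.k₁ t * ch - F.k₂ t * sh) ^ 2 / 2) * d22
      + (a ^ 2 * ch ^ 2 / 2) * d33
      + (a * (F.k₁ t * ch - F.k₂ t * sh) * sh) * d12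
      + (-(a ^ 2 * sh * ch)) * d13
      + (-(a * (F.k₁ t * ch - F.k₂ t * sh) * ch)) * d23
      + (a * b) * hpy
  rw [hden, hnum]
end
end

section
/- (Theorem 2.1(1) and Corollary 2.1(1)) Let (u₁,u₂,u₃,u₁*,u₂*,u₃*,k₁,k₂,k₁*,k₂*) be a closed dual timelike Frenet frame of period T, let d, d* be the Steiner vectors at t₀, let φ, φ* ∈ ℝ, and let (v₁,v₂,v₃,v₁*,v₂*,v₃*) be the parallel frame with curvature data p, p*, q, q*. Then the pitch of the closed ruled surface generated by (v₁,v₁*) is L_{V₁} = ⟨d, v₁*(t₀)⟩ + ⟨d*, v₁(t₀)⟩ = ∮q* = cosh φ·L_{u₁} + sinh φ·L_{u₃} - φ*(sinh φ·λ_{u₁} + cosh φ·λ_{u₃}). -/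
noncomputable section

/-- Theorem 2.1(1) and Corollary 2.1(1): the pitch of the ruled surface generated by
`(v₁,v₁*)` is `∮q* = cosh φ·L_{u₁} + sinh φ·L_{u₃} - φ*(sinh φ·λ_{u₁} + cosh φ·λ_{u₃})`. -/
theorem pitch_v₁ {T : ℝ} (F : DualFrenetFrame T) (t₀ φ φs : ℝ) :
    lin (dvec F t₀) (pv₁s F φ φs t₀) + lin (dvecs F t₀) (pv₁ F φ t₀)
      = oint T (pqs F φ φs) ∧
    oint T (pqs F φ φs)
      = Real.cosh φ * (-oint T F.k₂s) + Real.sinh φ * (-oint T F.k₁s)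
        - φs * (Real.sinh φ * oint T F.k₂ + Real.cosh φ * oint T F.k₁) := by
  have i1 : IntervalIntegrable F.k₁ MeasureTheory.volume 0 T :=
    F.cont_k₁.intervalIntegrable 0 T
  have i2 : IntervalIntegrable F.k₂ MeasureTheory.volume 0 T :=
    F.cont_k₂.intervalIntegrable 0 T
  have i1s : IntervalIntegrable F.k₁s MeasureTheory.volume 0 T :=
    F.cont_k₁s.intervalIntegrable 0 T
  have i2s : IntervalIntegrable F.k₂s MeasureTheory.volume 0 T :=
    F.cont_k₂s.intervalIntegrable 0 T
  have hint : oint T (pqs F φ φs)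
      = Real.cosh φ * (-oint T F.k₂s) + Real.sinh φ * (-oint T F.k₁s)
        - φs * (Real.sinh φ * oint T F.k₂ + Real.cosh φ * oint T F.k₁) := by
    have heq : (fun t => pqs F φ φs t) = fun t =>
        ((-Real.sinh φ) * F.k₁s t + (-Real.cosh φ) * F.k₂s t)
          + ((-(φs * Real.cosh φ)) * F.k₁ t + (-(φs * Real.sinh φ)) * F.k₂ t) := by
      funext t; simp only [pqs]; ring
    unfold oint
    rw [show pqs F φ φs = fun t => pqs F φ φs t from rfl, heq,
      intervalIntegral.integral_add ((i1s.const_mul _).add (i2s.const_mul _))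
        ((i1.const_mul _).add (i2.const_mul _)),
      intervalIntegral.integral_add (i1s.const_mul _) (i2s.const_mul _),
      intervalIntegral.integral_add (i1.const_mul _) (i2.const_mul _),
      intervalIntegral.integral_const_mul, intervalIntegral.integral_const_mul,
      intervalIntegral.integral_const_mul, intervalIntegral.integral_const_mul]
    ring
  refine ⟨?_, hint⟩
  rw [hint]
  have h11 := F.h₁₁ t₀
  have h13 := F.h₁₃ t₀
  have h33 := F.h₃₃ t₀
  have hd11 := F.hd₁₁ t₀
  have hd13 := F.hd₁₃ t₀
  have hd31 := F.hd₃₁ t₀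
  have hd33 := F.hd₃₃ t₀
  simp only [lin, dvec, dvecs, pv₁, pv₁s, Pi.add_apply, Pi.sub_apply, Pi.smul_apply,
    Pi.neg_apply, smul_eq_mul] at *
  set l2 := oint T F.k₂
  set l1 := oint T F.k₁
  set L2 := oint T F.k₂s
  set L1 := oint T F.k₁s
  set c := Real.cosh φ
  set s := Real.sinh φ
  linear_combination l2*c*hd11 + l2*s*hd13 - l1*c*hd31 - l1*s*hd33
    + l2*φs*s*h11 + (l2*φs*c - l1*φs*s + L2*s - L1*c)*h13 - l1*φs*c*h33
    + L2*c*h11 - L1*s*h33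
end
end

section
/- (Theorem 2.1(2) and Corollary 2.1(2), real part) Let (u₁,u₂,u₃,u₁*,u₂*,u₃*,k₁,k₂,k₁*,k₂*) be a closed dual timelike Frenet frame of period T, let d, d* be the Steiner vectors at t₀, let φ, φ* ∈ ℝ, and let (v₁,v₂,v₃,v₁*,v₂*,v₃*) be the parallel frame with curvature data p, p*, q, q*. Then the real angle of pitch of the closed ruled surface generated by (v₁,v₁*) is λ_{V₁} = -⟨d, v₁(t₀)⟩ = -∮q = cosh φ·λ_{u₁} + sinh φ·λ_{u₃}. -/
noncomputable section

theorem lin_smul_add_smul {e₁ e₃ : Fin 3 → ℝ} (h₁₁ : lin e₁ e₁ = -1) (h₁₃ : lin e₁ e₃ = 0)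
    (h₃₃ : lin e₃ e₃ = 1) (a b c d : ℝ) :
    lin (a • e₁ + b • e₃) (c • e₁ + d • e₃) = -(a * c) + b * d := by
  simp only [lin, Pi.add_apply, Pi.smul_apply, smul_eq_mul] at *
  linear_combination (a * c) * h₁₁ + (b * d) * h₃₃ + (a * d + b * c) * h₁₃

open MeasureTheory in
theorem oint_const_mul_add {T : ℝ} {f g : ℝ → ℝ} (hf : IntervalIntegrable f volume 0 T)
    (hg : IntervalIntegrable g volume 0 T) (a b : ℝ) :
    oint T (fun t => a * f t + b * g t) = a * oint T f + b * oint T g := by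
  simp only [oint]
  rw [intervalIntegral.integral_add (hf.const_mul a) (hg.const_mul b),
    intervalIntegral.integral_const_mul, intervalIntegral.integral_const_mul]

theorem oint_pq {T : ℝ} (F : DualFrenetFrame T) (φ : ℝ) :
    oint T (pq F φ) = -(Real.sinh φ * oint T F.k₁ + Real.cosh φ * oint T F.k₂) := by
  have hpq : pq F φ = fun t => -Real.sinh φ * F.k₁ t + -Real.cosh φ * F.k₂ t := by
    funext t
    simp only [pq]
    ring
  rw [hpq, oint_const_mul_add (F.cont_k₁.intervalIntegrable _ _)
    (F.cont_k₂.intervalIntegrable _ _)]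
  ring

theorem lin_dvec_pv₁ {T : ℝ} (F : DualFrenetFrame T) (t₀ φ : ℝ) :
    lin (dvec F t₀) (pv₁ F φ t₀) =
      -(Real.cosh φ * oint T F.k₂ + Real.sinh φ * oint T F.k₁) := by
  rw [dvec, sub_eq_add_neg, ← neg_smul, pv₁,
    lin_smul_add_smul (F.h₁₁ t₀) (F.h₁₃ t₀) (F.h₃₃ t₀)]
  ring

theorem angle_of_pitch_v₁_general {T : ℝ} (F : DualFrenetFrame T) (t₀ φ : ℝ) :
    -lin (dvec F t₀) (pv₁ F φ t₀) = -oint T (pq F φ) ∧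
    -oint T (pq F φ)
      = Real.cosh φ * oint T F.k₂ + Real.sinh φ * oint T F.k₁ := by
  rw [lin_dvec_pv₁, oint_pq]
  constructor <;> ring

/-- Theorem 2.1(2) and Corollary 2.1(2), real part: the real angle of pitch of the
ruled surface generated by `(v₁,v₁*)` is `-∮q = cosh φ·λ_{u₁} + sinh φ·λ_{u₃}`. -/
theorem angle_of_pitch_v₁ {T : ℝ} (F : DualFrenetFrame T) (t₀ φ φs : ℝ) :
    -lin (dvec F t₀) (pv₁ F φ t₀) = -oint T (pq F φ) ∧
    -oint T (pq F φ)
      = Real.cosh φ * oint T F.k₂ + Real.sinh φ * oint T F.k₁ :=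
  angle_of_pitch_v₁_general F t₀ φ
end
end

section
/- (Theorem 2.2) Let (u₁,u₂,u₃,u₁*,u₂*,u₃*,k₁,k₂,k₁*,k₂*) be a closed dual timelike Frenet frame of period T, let d, d* be the Steiner vectors at t₀, let φ, φ* ∈ ℝ, and let (v₁,v₂,v₃,v₁*,v₂*,v₃*) be the parallel frame with curvature data p, p*, q, q*. Then (1) the pitch of the closed ruled surface generated by (v₂,v₂*) vanishes: ⟨d, v₂*(t₀)⟩ + ⟨d*, v₂(t₀)⟩ = 0; (2) its real angle of pitch vanishes: ⟨d, v₂(t₀)⟩ = 0; and (3) at every t with q(t)² ≠ p(t)², its drall satisfies ⟨v₂'(t), v₂*'(t)⟩ / ⟨v₂'(t), v₂'(t)⟩ = (qq* - pp*)/(q² - p²) = (k₂k₂* - k₁k₁*)/(k₂² - k₁²), all evaluated at t. -/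
noncomputable section

/-- Theorem 2.2: the pitch and real angle of pitch of the ruled surface generated by
`(v₂,v₂*)` vanish, and its drall is `(qq* - pp*)/(q² - p²) = (k₂k₂* - k₁k₁*)/(k₂² - k₁²)`. -/
theorem thm_2_2_v₂ {T : ℝ} (F : DualFrenetFrame T) (t₀ φ φs : ℝ) :
    (lin (dvec F t₀) (pv₂s F t₀) + lin (dvecs F t₀) (pv₂ F t₀) = 0) ∧
    (lin (dvec F t₀) (pv₂ F t₀) = 0) ∧
    (∀ t, pq F φ t ^ 2 ≠ pp F φ t ^ 2 →
      lin (deriv (pv₂ F) t) (deriv (pv₂s F) t)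
          / lin (deriv (pv₂ F) t) (deriv (pv₂ F) t)
        = (pq F φ t * pqs F φ φs t - pp F φ t * pps F φ φs t)
            / (pq F φ t ^ 2 - pp F φ t ^ 2) ∧
      (pq F φ t * pqs F φ φs t - pp F φ t * pps F φ φs t)
          / (pq F φ t ^ 2 - pp F φ t ^ 2)
        = (F.k₂ t * F.k₂s t - F.k₁ t * F.k₁s t) / (F.k₂ t ^ 2 - F.k₁ t ^ 2)) := by

  refine ⟨?_, ?_, ?_⟩
  · have e1 := F.hd₁₂ t₀
    have e2 := F.hd₃₂ t₀
    have e3 := F.h₁₂ t₀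
    have e4 := F.h₂₃ t₀
    simp only [lin, dvec, dvecs, pv₂, pv₂s, Pi.add_apply, Pi.sub_apply,
      Pi.smul_apply, smul_eq_mul] at *
    linear_combination oint T F.k₂ * e1 - oint T F.k₁ * e2
      + oint T F.k₂s * e3 - oint T F.k₁s * e4
  · have e3 := F.h₁₂ t₀
    have e4 := F.h₂₃ t₀
    simp only [lin, dvec, pv₂, Pi.add_apply, Pi.sub_apply,
      Pi.smul_apply, smul_eq_mul] at *
    linear_combination oint T F.k₂ * e3 - oint T F.k₁ * e4
  · intro t _
    have hv : deriv (pv₂ F) t = F.k₁ t • F.u₁ t - F.k₂ t • F.u₃ t := F.frenet₂ t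
    have hvs : deriv (pv₂s F) t =
        F.k₁s t • F.u₁ t - F.k₂s t • F.u₃ t + F.k₁ t • F.u₁s t - F.k₂ t • F.u₃s t :=
      F.frenet₂s t
    have e11 := F.h₁₁ t
    have e33 := F.h₃₃ t
    have e13 := F.h₁₃ t
    have d11 := F.hd₁₁ t
    have d33 := F.hd₃₃ t
    have d13 := F.hd₁₃ t
    have hc := Real.cosh_sq_sub_sinh_sq φ
    have hN : lin (deriv (pv₂ F) t) (deriv (pv₂s F) t)
        = F.k₂ t * F.k₂s t - F.k₁ t * F.k₁s t := by
      rw [hv, hvs]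
      simp only [lin, Pi.add_apply, Pi.sub_apply, Pi.smul_apply, smul_eq_mul] at *
      linear_combination F.k₁ t * F.k₁s t * e11 + F.k₂ t * F.k₂s t * e33
        - (F.k₁ t * F.k₂s t + F.k₂ t * F.k₁s t) * e13
        + (F.k₁ t ^ 2 / 2) * d11 + (F.k₂ t ^ 2 / 2) * d33 - F.k₁ t * F.k₂ t * d13
    have hD : lin (deriv (pv₂ F) t) (deriv (pv₂ F) t)
        = F.k₂ t ^ 2 - F.k₁ t ^ 2 := by
      rw [hv]
      simp only [lin, Pi.add_apply, Pi.sub_apply, Pi.smul_apply, smul_eq_mul] at *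
      linear_combination F.k₁ t ^ 2 * e11 + F.k₂ t ^ 2 * e33
        - 2 * F.k₁ t * F.k₂ t * e13
    have hN' : pq F φ t * pqs F φ φs t - pp F φ t * pps F φ φs t
        = F.k₂ t * F.k₂s t - F.k₁ t * F.k₁s t := by
      simp only [pq, pqs, pp, pps]
      linear_combination (F.k₂ t * F.k₂s t - F.k₁ t * F.k₁s t) * hc
    have hD' : pq F φ t ^ 2 - pp F φ t ^ 2 = F.k₂ t ^ 2 - F.k₁ t ^ 2 := by
      simp only [pq, pp]
      linear_combination (F.k₂ t ^ 2 - F.k₁ t ^ 2) * hc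
    rw [hN, hD, hN', hD']
    exact ⟨rfl, rfl⟩
end
end

section
/- (Theorem 2.3(1) and Corollary 2.2(1)) Let (u₁,u₂,u₃,u₁*,u₂*,u₃*,k₁,k₂,k₁*,k₂*) be a closed dual timelike Frenet frame of period T, let d, d* be the Steiner vectors at t₀, let φ, φ* ∈ ℝ, and let (v₁,v₂,v₃,v₁*,v₂*,v₃*) be the parallel frame with curvature data p, p*, q, q*. Then the pitch of the closed ruled surface generated by (v₃,v₃*) is L_{V₃} = ⟨d, v₃*(t₀)⟩ + ⟨d*, v₃(t₀)⟩ = ∮p* = -sinh φ·L_{u₁} - cosh φ·L_{u₃} + φ*(cosh φ·λ_{u₁} + sinh φ·λ_{u₃}). -/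
noncomputable section

/-- Theorem 2.3(1) and Corollary 2.2(1): the pitch of the ruled surface generated by
`(v₃,v₃*)` is `∮p* = -sinh φ·L_{u₁} - cosh φ·L_{u₃} + φ*(cosh φ·λ_{u₁} + sinh φ·λ_{u₃})`. -/
theorem pitch_v₃ {T : ℝ} (F : DualFrenetFrame T) (t₀ φ φs : ℝ) :
    lin (dvec F t₀) (pv₃s F φ φs t₀) + lin (dvecs F t₀) (pv₃ F φ t₀)
      = oint T (pps F φ φs) ∧
    oint T (pps F φ φs)
      = -(Real.sinh φ * (-oint T F.k₂s)) - Real.cosh φ * (-oint T F.k₁s)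
        + φs * (Real.cosh φ * oint T F.k₂ + Real.sinh φ * oint T F.k₁) := by

  have i1 : IntervalIntegrable F.k₁ MeasureTheory.volume 0 T := F.cont_k₁.intervalIntegrable 0 T
  have i2 : IntervalIntegrable F.k₂ MeasureTheory.volume 0 T := F.cont_k₂.intervalIntegrable 0 T
  have i3 : IntervalIntegrable F.k₁s MeasureTheory.volume 0 T := F.cont_k₁s.intervalIntegrable 0 T
  have i4 : IntervalIntegrable F.k₂s MeasureTheory.volume 0 T := F.cont_k₂s.intervalIntegrable 0 T
  have key : oint T (pps F φ φs)
      = Real.cosh φ * oint T F.k₁s + Real.sinh φ * oint T F.k₂s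
        + φs * Real.sinh φ * oint T F.k₁ + φs * Real.cosh φ * oint T F.k₂ := by
    unfold oint pps
    rw [show (fun t => F.k₁s t * Real.cosh φ + F.k₂s t * Real.sinh φ
        + φs * (F.k₁ t * Real.sinh φ + F.k₂ t * Real.cosh φ))
      = fun t => (Real.cosh φ * F.k₁s t + Real.sinh φ * F.k₂s t)
        + (φs * Real.sinh φ * F.k₁ t + φs * Real.cosh φ * F.k₂ t) from
        funext fun t => by ring]
    rw [intervalIntegral.integral_add ((i3.const_mul _).add (i4.const_mul _))
        ((i1.const_mul _).add (i2.const_mul _)),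
      intervalIntegral.integral_add (i3.const_mul _) (i4.const_mul _),
      intervalIntegral.integral_add (i1.const_mul _) (i2.const_mul _),
      intervalIntegral.integral_const_mul, intervalIntegral.integral_const_mul,
      intervalIntegral.integral_const_mul, intervalIntegral.integral_const_mul]
    ring
  constructor
  · rw [key]
    have H11 := F.h₁₁ t₀
    have H33 := F.h₃₃ t₀
    have H13 := F.h₁₃ t₀
    have D11 := F.hd₁₁ t₀
    have D13 := F.hd₁₃ t₀
    have D31 := F.hd₃₁ t₀
    have D33 := F.hd₃₃ t₀
    simp only [lin, dvec, dvecs, pv₃, pv₃s, Pi.add_apply, Pi.sub_apply, Pi.smul_apply,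
      Pi.neg_apply, smul_eq_mul] at H11 H33 H13 D11 D13 D31 D33 ⊢
    linear_combination (-(oint T F.k₂ * Real.sinh φ)) * D11
      + (-(oint T F.k₂ * Real.cosh φ)) * D13
      + (oint T F.k₁ * Real.sinh φ) * D31
      + (oint T F.k₁ * Real.cosh φ) * D33
      + (-(oint T F.k₂ * φs * Real.cosh φ) - oint T F.k₂s * Real.sinh φ) * H11
      + (-(oint T F.k₂ * φs * Real.sinh φ) + oint T F.k₁ * φs * Real.cosh φ
          - oint T F.k₂s * Real.cosh φ + oint T F.k₁s * Real.sinh φ) * H13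
      + (oint T F.k₁ * φs * Real.sinh φ + oint T F.k₁s * Real.cosh φ) * H33
  · rw [key]; ring
end
end

section
/- (Theorem 2.3(2), real part) Let (u₁,u₂,u₃,u₁*,u₂*,u₃*,k₁,k₂,k₁*,k₂*) be a closed dual timelike Frenet frame of period T, let d, d* be the Steiner vectors at t₀, let φ, φ* ∈ ℝ, and let (v₁,v₂,v₃,v₁*,v₂*,v₃*) be the parallel frame with curvature data p, p*, q, q*. Then the real angle of pitch of the closed ruled surface generated by (v₃,v₃*) is λ_{V₃} = -⟨d, v₃(t₀)⟩ = -∮p = -sinh φ·λ_{u₁} - cosh φ·λ_{u₃}. -/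
noncomputable section

/-- Theorem 2.3(2), real part: the real angle of pitch of the ruled surface generated
by `(v₃,v₃*)` is `-∮p = -sinh φ·λ_{u₁} - cosh φ·λ_{u₃}`. -/
theorem angle_of_pitch_v₃ {T : ℝ} (F : DualFrenetFrame T) (t₀ φ φs : ℝ) :
    -lin (dvec F t₀) (pv₃ F φ t₀) = -oint T (pp F φ) ∧
    -oint T (pp F φ)
      = -(Real.sinh φ * oint T F.k₂) - Real.cosh φ * oint T F.k₁ := by
  have h11 := F.h₁₁ t₀
  have h13 := F.h₁₃ t₀
  have h33 := F.h₃₃ t₀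
  have hint : oint T (pp F φ)
      = Real.cosh φ * oint T F.k₁ + Real.sinh φ * oint T F.k₂ := by
    unfold oint pp
    rw [intervalIntegral.integral_add
      ((F.cont_k₁.intervalIntegrable 0 T).mul_const _)
      ((F.cont_k₂.intervalIntegrable 0 T).mul_const _),
      intervalIntegral.integral_mul_const, intervalIntegral.integral_mul_const]
    ring
  constructor
  · rw [hint]
    simp only [lin, dvec, pv₃, Pi.sub_apply, Pi.add_apply, Pi.neg_apply,
      Pi.smul_apply, smul_eq_mul] at *
    linear_combination (Real.sinh φ * oint T F.k₂) * h11
      - (Real.sinh φ * oint T F.k₁ - Real.cosh φ * oint T F.k₂) * h13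
      - (Real.cosh φ * oint T F.k₁) * h33
  · rw [hint]; ring
end
end

section
/- (Theorem 2.3(3)) Let (u₁,u₂,u₃,u₁*,u₂*,u₃*,k₁,k₂,k₁*,k₂*) be a closed dual timelike Frenet frame of period T, let φ, φ* ∈ ℝ, and let (v₁,v₂,v₃,v₁*,v₂*,v₃*) be the parallel frame with curvature data p, p*, q, q*. Then at every t with q(t) ≠ 0, the drall of the closed ruled surface generated by (v₃,v₃*) satisfies ⟨v₃'(t), v₃*'(t)⟩ / ⟨v₃'(t), v₃'(t)⟩ = q*(t)/q(t) = (k₁* sinh φ + k₂* cosh φ)/(k₁ sinh φ + k₂ cosh φ) + φ*·(k₁ cosh φ + k₂ sinh φ)/(k₁ sinh φ + k₂ cosh φ), with k₁, k₂, k₁*, k₂* evaluated at t. -/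
noncomputable section

/-- Theorem 2.3(3): the drall of the ruled surface generated by `(v₃,v₃*)` is `q*/q`. -/
theorem drall_v₃ {T : ℝ} (F : DualFrenetFrame T) (φ φs : ℝ) (t : ℝ)
    (h : pq F φ t ≠ 0) :
    lin (deriv (pv₃ F φ) t) (deriv (pv₃s F φ φs) t)
        / lin (deriv (pv₃ F φ) t) (deriv (pv₃ F φ) t)
      = pqs F φ φs t / pq F φ t ∧
    pqs F φ φs t / pq F φ t
      = (F.k₁s t * Real.sinh φ + F.k₂s t * Real.cosh φ)
          / (F.k₁ t * Real.sinh φ + F.k₂ t * Real.cosh φ)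
        + φs * (F.k₁ t * Real.cosh φ + F.k₂ t * Real.sinh φ)
          / (F.k₁ t * Real.sinh φ + F.k₂ t * Real.cosh φ) := by
  have h1 := (F.diff_u₁ t).hasDerivAt
  have h3 := (F.diff_u₃ t).hasDerivAt
  have h1s := (F.diff_u₁s t).hasDerivAt
  have h3s := (F.diff_u₃s t).hasDerivAt
  have H3 : deriv (pv₃ F φ) t = pq F φ t • F.u₂ t := by
    have H : HasDerivAt (pv₃ F φ)
        (-(Real.sinh φ • deriv F.u₁ t) - Real.cosh φ • deriv F.u₃ t) t :=
      ((h1.const_smul (Real.sinh φ)).neg).sub (h3.const_smul (Real.cosh φ))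
    rw [H.deriv, F.frenet₁, F.frenet₃, pq]
    ext i
    simp [Pi.smul_apply, smul_eq_mul]
    ring
  have H3s : deriv (pv₃s F φ φs) t = pqs F φ φs t • F.u₂ t + pq F φ t • F.u₂s t := by
    have H : HasDerivAt (pv₃s F φ φs)
        (-(Real.sinh φ • deriv F.u₁s t) - Real.cosh φ • deriv F.u₃s t
          - φs • (Real.cosh φ • deriv F.u₁ t + Real.sinh φ • deriv F.u₃ t)) t :=
      (((h1s.const_smul (Real.sinh φ)).neg).sub (h3s.const_smul (Real.cosh φ))).sub
        (((h1.const_smul (Real.cosh φ)).add (h3.const_smul (Real.sinh φ))).const_smul φs)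
    rw [H.deriv, F.frenet₁, F.frenet₃, F.frenet₁s, F.frenet₃s, pqs, pq]
    ext i
    simp [Pi.smul_apply, Pi.add_apply, smul_eq_mul]
    ring
  have e1 : lin (F.u₂ t) (F.u₂ t) = 1 := F.h₂₂ t
  have e2 : lin (F.u₂ t) (F.u₂s t) = 0 := by
    have := F.hd₂₂ t
    have hsym : lin (F.u₂ t) (F.u₂s t) = lin (F.u₂s t) (F.u₂ t) := by
      simp [lin]; ring
    linarith
  constructor
  · rw [H3, H3s]
    have hnum : lin (pq F φ t • F.u₂ t) (pqs F φ φs t • F.u₂ t + pq F φ t • F.u₂s t)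
        = pq F φ t * pqs F φ φs t := by
      simp only [lin, Pi.add_apply, Pi.smul_apply, smul_eq_mul] at *
      linear_combination (pq F φ t * pqs F φ φs t) * e1 + (pq F φ t * pq F φ t) * e2
    have hden : lin (pq F φ t • F.u₂ t) (pq F φ t • F.u₂ t) = pq F φ t * pq F φ t := by
      simp only [lin, Pi.smul_apply, smul_eq_mul] at *
      linear_combination (pq F φ t * pq F φ t) * e1
    rw [hnum, hden, mul_div_mul_left _ _ h]
  · have hD : F.k₁ t * Real.sinh φ + F.k₂ t * Real.cosh φ ≠ 0 := by
      intro hc; apply h; simp [pq]; linarith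
    have hq : pq F φ t = -(F.k₁ t * Real.sinh φ + F.k₂ t * Real.cosh φ) := by
      simp [pq]; ring
    have hqs : pqs F φ φs t = -((F.k₁s t * Real.sinh φ + F.k₂s t * Real.cosh φ)
        + φs * (F.k₁ t * Real.cosh φ + F.k₂ t * Real.sinh φ)) := by
      simp [pqs]; ring
    rw [hq, hqs, neg_div_neg_eq, add_div]
end
end

section
/- Let (u₁,u₂,u₃,u₁*,u₂*,u₃*,k₁,k₂,k₁*,k₂*) be a closed dual timelike Frenet frame of period T, let d, d* be the Steiner vectors at t₀, let φ, φ* ∈ ℝ, let (v₁,v₂,v₃,v₁*,v₂*,v₃*) be the parallel frame with curvature data p, p*, q, q*, and let θ, θ* : ℝ → ℝ be differentiable. Define c̄ = (sinh θ)v₁ - (cosh θ)v₃ and c̄* = (sinh θ)v₁* - (cosh θ)v₃* + θ*((cosh θ)v₁ - (sinh θ)v₃). Then (1) at every t, c̄(t) = sinh(θ(t)+φ)·u₁(t) + cosh(θ(t)+φ)·u₃(t); (2) the pitch of the closed ruled surface generated by (c̄,c̄*) is L_{C̄} = ⟨d, c̄*(t₀)⟩ + ⟨d*, c̄(t₀)⟩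 = sinh(θ(t₀)+φ)·L_{u₁} + cosh(θ(t₀)+φ)·L_{u₃} - (φ* + θ*(t₀))(cosh(θ(t₀)+φ)·λ_{u₁} + sinh(θ(t₀)+φ)·λ_{u₃}); and (3) its real angle of pitch is λ_{C̄} = -⟨d, c̄(t₀)⟩ = sinh(θ(t₀)+φ)·λ_{u₁} + cosh(θ(t₀)+φ)·λ_{u₃}. -/
noncomputable section

/-- The spacelike Pfaffian-axis direction of the parallel frame,
`c̄ = sinh θ · v₁ - cosh θ · v₃`, equals `sinh(θ+φ)·u₁ + cosh(θ+φ)·u₃`; its pitch is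
`sinh(θ+φ)·L_{u₁} + cosh(θ+φ)·L_{u₃} - (φ*+θ*)(cosh(θ+φ)·λ_{u₁} + sinh(θ+φ)·λ_{u₃})`
and its real angle of pitch is `sinh(θ+φ)·λ_{u₁} + cosh(θ+φ)·λ_{u₃}`. -/
theorem parallel_spacelike_axis {T : ℝ} (F : DualFrenetFrame T) (t₀ φ φs : ℝ)
    (θ θs : ℝ → ℝ) (hθ : Differentiable ℝ θ) (hθs : Differentiable ℝ θs)
    (cb cbs : ℝ → Fin 3 → ℝ)
    (hcb : cb = fun t => Real.sinh (θ t) • pv₁ F φ t - Real.cosh (θ t) • pv₃ F φ t)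
    (hcbs : cbs = fun t =>
      Real.sinh (θ t) • pv₁s F φ φs t - Real.cosh (θ t) • pv₃s F φ φs t
        + θs t • (Real.cosh (θ t) • pv₁ F φ t - Real.sinh (θ t) • pv₃ F φ t)) :
    (∀ t, cb t = Real.sinh (θ t + φ) • F.u₁ t + Real.cosh (θ t + φ) • F.u₃ t) ∧
    lin (dvec F t₀) (cbs t₀) + lin (dvecs F t₀) (cb t₀)
      = Real.sinh (θ t₀ + φ) * (-oint T F.k₂s)
        + Real.cosh (θ t₀ + φ) * (-oint T F.k₁s)
        - (φs + θs t₀) * (Real.cosh (θ t₀ + φ) * oint T F.k₂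
            + Real.sinh (θ t₀ + φ) * oint T F.k₁) ∧
    -lin (dvec F t₀) (cb t₀)
      = Real.sinh (θ t₀ + φ) * oint T F.k₂ + Real.cosh (θ t₀ + φ) * oint T F.k₁ := by
  subst hcb hcbs
  have e11 := F.h₁₁ t₀
  have e13 := F.h₁₃ t₀
  have e33 := F.h₃₃ t₀
  have d11 := F.hd₁₁ t₀
  have d13 := F.hd₁₃ t₀
  have d31 := F.hd₃₁ t₀
  have d33 := F.hd₃₃ t₀
  simp only [lin] at e11 e13 e33 d11 d13 d31 d33
  set A := oint T F.k₂ with hA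
  set B := oint T F.k₁ with hB
  set As := oint T F.k₂s with hAs
  set Bs := oint T F.k₁s with hBs
  refine ⟨?_, ?_, ?_⟩
  · intro t
    funext i
    simp only [pv₁, pv₃, Pi.add_apply, Pi.sub_apply, Pi.smul_apply, Pi.neg_apply,
      smul_eq_mul, Real.sinh_add, Real.cosh_add]
    ring
  · simp only [lin, dvec, dvecs, pv₁, pv₃, pv₁s, pv₃s, Pi.add_apply, Pi.sub_apply,
      Pi.smul_apply, Pi.neg_apply, smul_eq_mul, Real.sinh_add, Real.cosh_add]
    linear_combination
      (A * (Real.sinh (θ t₀) * Real.cosh φ + Real.cosh (θ t₀) * Real.sinh φ)) * d11 +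
      (A * (Real.cosh (θ t₀) * Real.cosh φ + Real.sinh (θ t₀) * Real.sinh φ)) * d13 -
      (B * (Real.sinh (θ t₀) * Real.cosh φ + Real.cosh (θ t₀) * Real.sinh φ)) * d31 -
      (B * (Real.cosh (θ t₀) * Real.cosh φ + Real.sinh (θ t₀) * Real.sinh φ)) * d33 +
      (A * (φs + θs t₀) * (Real.cosh (θ t₀) * Real.cosh φ + Real.sinh (θ t₀) * Real.sinh φ) +
        As * (Real.sinh (θ t₀) * Real.cosh φ + Real.cosh (θ t₀) * Real.sinh φ)) * e11 +
      (A * (φs + θs t₀) * (Real.sinh (θ t₀) * Real.cosh φ + Real.cosh (θ t₀) * Real.sinh φ) +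
        As * (Real.cosh (θ t₀) * Real.cosh φ + Real.sinh (θ t₀) * Real.sinh φ) -
        B * (φs + θs t₀) * (Real.cosh (θ t₀) * Real.cosh φ + Real.sinh (θ t₀) * Real.sinh φ) -
        Bs * (Real.sinh (θ t₀) * Real.cosh φ + Real.cosh (θ t₀) * Real.sinh φ)) * e13 -
      (B * (φs + θs t₀) * (Real.sinh (θ t₀) * Real.cosh φ + Real.cosh (θ t₀) * Real.sinh φ) +
        Bs * (Real.cosh (θ t₀) * Real.cosh φ + Real.sinh (θ t₀) * Real.sinh φ)) * e33
  · simp only [lin, dvec, pv₁, pv₃, Pi.add_apply, Pi.sub_apply,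
      Pi.smul_apply, Pi.neg_apply, smul_eq_mul, Real.sinh_add, Real.cosh_add]
    linear_combination
      (-(A * (Real.sinh (θ t₀) * Real.cosh φ + Real.cosh (θ t₀) * Real.sinh φ))) * e11 -
      (A * (Real.cosh (θ t₀) * Real.cosh φ + Real.sinh (θ t₀) * Real.sinh φ) -
        B * (Real.sinh (θ t₀) * Real.cosh φ + Real.cosh (θ t₀) * Real.sinh φ)) * e13 +
      (B * (Real.cosh (θ t₀) * Real.cosh φ + Real.sinh (θ t₀) * Real.sinh φ)) * e33
end
end
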